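/- arXiv:math/0602662 — 2 statements merged into one kernel-verified Lean document; each statement's English description precedes it below -/
import Mathlib

section
/- Fix λ ≠ 0 and let M = {x ∈ ℝ⁴ : x² − x⁴ > 0}. A continuously differentiable covector field A : M → ℝ⁴ satisfies the invariance conditions L_ξA = 0 on M for ξ = e₁, ξ = e₃, ξ = e₂ + e₄ = (0,1,0,1) and ξ = e₁₃ + λe₂₄ = (x³, λx⁴, −x¹, λx²) if and only if there exist constants C₁, C₂, C₃, C₄ ∈ ℝ such that, writing w = x² − x⁴, for all x ∈ M: A₁(x) = C₁·cos(ln(w)/λ) + C₃·sin(ln(w)/λ), A₃(x) = C₁·sin(ln(w)/λ) − C₃·cos(ln(w)/λ), A₂(x) = C₂·w + C₄/w and A₄(x) = C₂·w − C₄/w. (This is the class P₍₄,₇₎, proportional bi-rotations with translations in an isotropic hyperplane.) -/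
open Real

/-- Partial derivative of a scalar function on ℝ⁴ in the j-th coordinate direction. -/
noncomputable def pd (j : Fin 4) (f : (Fin 4 → ℝ) → ℝ) (x : Fin 4 → ℝ) : ℝ :=
  fderiv ℝ f x (Pi.single j 1)

/-- The i-th component of the Lie derivative of the covector field A along
the vector field ξ at the point x:  Σ_j ξ^j ∂_j A_i + Σ_j A_j ∂_i ξ^j. -/
noncomputable def lieCov (ξ A : (Fin 4 → ℝ) → Fin 4 → ℝ) (x : Fin 4 → ℝ) (i : Fin 4) : ℝ :=
  (∑ j : Fin 4, ξ x j * pd j (fun y => A y i) x)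
    + ∑ j : Fin 4, A x j * pd i (fun y => ξ y j) x

/-- Invariance condition L_ξ A = 0 on all of ℝ⁴. -/
def PInvariant (ξ A : (Fin 4 → ℝ) → Fin 4 → ℝ) : Prop :=
  ∀ x i, lieCov ξ A x i = 0

/-- Invariance condition L_ξ A = 0 on a set M. -/
def PInvariantOn (ξ A : (Fin 4 → ℝ) → Fin 4 → ℝ) (M : Set (Fin 4 → ℝ)) : Prop :=
  ∀ x ∈ M, ∀ i, lieCov ξ A x i = 0

def e1 : (Fin 4 → ℝ) → Fin 4 → ℝ := fun _ => ![1, 0, 0, 0]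
def e2 : (Fin 4 → ℝ) → Fin 4 → ℝ := fun _ => ![0, 1, 0, 0]
def e3 : (Fin 4 → ℝ) → Fin 4 → ℝ := fun _ => ![0, 0, 1, 0]
def e4 : (Fin 4 → ℝ) → Fin 4 → ℝ := fun _ => ![0, 0, 0, 1]
def e12 : (Fin 4 → ℝ) → Fin 4 → ℝ := fun x => ![-x 1, x 0, 0, 0]
def e13 : (Fin 4 → ℝ) → Fin 4 → ℝ := fun x => ![x 2, 0, -x 0, 0]
def e23 : (Fin 4 → ℝ) → Fin 4 → ℝ := fun x => ![0, -x 2, x 1, 0]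
def e14 : (Fin 4 → ℝ) → Fin 4 → ℝ := fun x => ![x 3, 0, 0, x 0]
def e24 : (Fin 4 → ℝ) → Fin 4 → ℝ := fun x => ![0, x 3, 0, x 1]
def e34 : (Fin 4 → ℝ) → Fin 4 → ℝ := fun x => ![0, 0, x 3, x 2]

abbrev MM : Set (Fin 4 → ℝ) := {x : Fin 4 → ℝ | 0 < x 1 - x 3}

lemma isOpen_MM : IsOpen MM :=
  isOpen_lt continuous_const ((continuous_apply 1).sub (continuous_apply 3))

lemma pd_const (j : Fin 4) (c : ℝ) (x : Fin 4 → ℝ) : pd j (fun _ : Fin 4 → ℝ => c) x = 0 := by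
  simp [pd]

lemma pd_proj (j k : Fin 4) (x : Fin 4 → ℝ) :
    pd j (fun y : Fin 4 → ℝ => y k) x = (Pi.single j 1 : Fin 4 → ℝ) k := by
  have h : fderiv ℝ (fun y : Fin 4 → ℝ => y k) x
      = ContinuousLinearMap.proj (R := ℝ) (φ := fun _ : Fin 4 => ℝ) k :=
    (ContinuousLinearMap.proj k : (Fin 4 → ℝ) →L[ℝ] ℝ).fderiv
  simp [pd, h]

lemma pd_const_mul_proj (c : ℝ) (j k : Fin 4) (x : Fin 4 → ℝ) :
    pd j (fun y : Fin 4 → ℝ => c * y k) x = c * (Pi.single j 1 : Fin 4 → ℝ) k := by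
  unfold pd
  have hd : DifferentiableAt ℝ (fun y : Fin 4 → ℝ => y k) x :=
    (ContinuousLinearMap.proj k : (Fin 4 → ℝ) →L[ℝ] ℝ).differentiableAt
  rw [fderiv_const_mul hd c]
  rw [ContinuousLinearMap.smul_apply]
  rw [show fderiv ℝ (fun y : Fin 4 → ℝ => y k) x
      = ContinuousLinearMap.proj (R := ℝ) (φ := fun _ : Fin 4 => ℝ) k from
    (ContinuousLinearMap.proj k : (Fin 4 → ℝ) →L[ℝ] ℝ).fderiv]
  simp

lemma pd_neg_proj (j k : Fin 4) (x : Fin 4 → ℝ) :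
    pd j (fun y : Fin 4 → ℝ => -y k) x = -(Pi.single j 1 : Fin 4 → ℝ) k := by
  have := pd_const_mul_proj (-1) j k x
  simpa [neg_one_mul] using this

lemma fderiv_apply_eq_sum (f : (Fin 4 → ℝ) → ℝ) (x v : Fin 4 → ℝ)
    (hf : DifferentiableAt ℝ f x) :
    fderiv ℝ f x v = ∑ j : Fin 4, v j * pd j f x := by
  have hv : v = ∑ j : Fin 4, v j • (Pi.single j 1 : Fin 4 → ℝ) := by
    funext k
    simp [Finset.sum_apply, Pi.single_apply]
  conv_lhs => rw [hv]
  rw [map_sum]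
  simp [pd, smul_eq_mul]

lemma diffAt {A : (Fin 4 → ℝ) → Fin 4 → ℝ} (hA : ContDiffOn ℝ 1 A MM) {x : Fin 4 → ℝ}
    (hx : x ∈ MM) (i : Fin 4) : DifferentiableAt ℝ (fun y => A y i) x := by
  have h1 : DifferentiableAt ℝ A x :=
    ((hA.differentiableOn one_ne_zero).differentiableAt (isOpen_MM.mem_nhds hx))
  exact differentiableAt_pi.mp h1 i

lemma const_along {g : (Fin 4 → ℝ) → ℝ} {v : Fin 4 → ℝ}
    (hdiff : ∀ x ∈ MM, DifferentiableAt ℝ g x)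
    (hv : v 1 - v 3 = 0)
    (hzero : ∀ x ∈ MM, ∑ j : Fin 4, v j * pd j g x = 0)
    {x : Fin 4 → ℝ} (hx : x ∈ MM) (s : ℝ) :
    g (x + s • v) = g x := by
  have hmem : ∀ t : ℝ, x + t • v ∈ MM := by
    intro t
    have h : (x + t • v) 1 - (x + t • v) 3 = (x 1 - x 3) + t * (v 1 - v 3) := by
      simp [Pi.add_apply, Pi.smul_apply]; ring
    show 0 < (x + t • v) 1 - (x + t • v) 3
    rw [h, hv, mul_zero, add_zero]; exact hx
  have hD : ∀ t : ℝ, HasDerivAt (fun t : ℝ => g (x + t • v)) 0 t := by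
    intro t
    have hline : HasDerivAt (fun t : ℝ => x + t • v) v t := by
      simpa using ((hasDerivAt_id t).smul_const v).const_add x
    have h2 := (hdiff _ (hmem t)).hasFDerivAt.comp_hasDerivAt t hline
    rw [fderiv_apply_eq_sum _ _ _ (hdiff _ (hmem t)), hzero _ (hmem t)] at h2
    exact h2
  have := is_const_of_deriv_eq_zero (fun t => (hD t).differentiableAt)
    (fun t => (hD t).deriv) s 0
  simpa using this

lemma fact1 {A : (Fin 4 → ℝ) → Fin 4 → ℝ} (h : PInvariantOn e1 A MM)
    {x : Fin 4 → ℝ} (hx : x ∈ MM) (i : Fin 4) : pd 0 (fun y => A y i) x = 0 := by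
  have := h x hx i
  simpa [lieCov, e1, Fin.sum_univ_four, pd_const] using this

lemma fact3 {A : (Fin 4 → ℝ) → Fin 4 → ℝ} (h : PInvariantOn e3 A MM)
    {x : Fin 4 → ℝ} (hx : x ∈ MM) (i : Fin 4) : pd 2 (fun y => A y i) x = 0 := by
  have := h x hx i
  simpa [lieCov, e3, Fin.sum_univ_four, pd_const] using this

lemma fact24 {A : (Fin 4 → ℝ) → Fin 4 → ℝ}
    (h : PInvariantOn (fun _ => ![0, 1, 0, 1]) A MM)
    {x : Fin 4 → ℝ} (hx : x ∈ MM) (i : Fin 4) :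
    pd 1 (fun y => A y i) x + pd 3 (fun y => A y i) x = 0 := by
  have := h x hx i
  simpa [lieCov, Fin.sum_univ_four, pd_const] using this

lemma factX {l : ℝ} {A : (Fin 4 → ℝ) → Fin 4 → ℝ}
    (h : PInvariantOn (fun x => ![x 2, l * x 3, -x 0, l * x 1]) A MM)
    (h1 : PInvariantOn e1 A MM) (h3 : PInvariantOn e3 A MM)
    (h24 : PInvariantOn (fun _ => ![0, 1, 0, 1]) A MM)
    {x : Fin 4 → ℝ} (hx : x ∈ MM) (i : Fin 4) :
    l * (x 1 - x 3) * pd 1 (fun y => A y i) x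
      = A x 0 * (Pi.single i 1 : Fin 4 → ℝ) 2 + l * A x 1 * (Pi.single i 1 : Fin 4 → ℝ) 3
        - A x 2 * (Pi.single i 1 : Fin 4 → ℝ) 0 + l * A x 3 * (Pi.single i 1 : Fin 4 → ℝ) 1 := by
  have hc := h x hx i
  simp only [lieCov, Fin.sum_univ_four, Matrix.cons_val_zero, Matrix.cons_val_one,
    Matrix.head_cons, Matrix.cons_val_two, Matrix.tail_cons, Matrix.cons_val_three,
    pd_proj, pd_const_mul_proj, pd_neg_proj] at hc
  have hp3 : pd 3 (fun y => A y i) x = - pd 1 (fun y => A y i) x := by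
    have := fact24 h24 hx i; linarith
  rw [fact1 h1 hx i, fact3 h3 hx i, hp3] at hc
  linear_combination -hc

section corollaries
variable {l : ℝ} {A : (Fin 4 → ℝ) → Fin 4 → ℝ}
    (h : PInvariantOn (fun x => ![x 2, l * x 3, -x 0, l * x 1]) A MM)
    (h1 : PInvariantOn e1 A MM) (h3 : PInvariantOn e3 A MM)
    (h24 : PInvariantOn (fun _ => ![0, 1, 0, 1]) A MM)
    (hl : l ≠ 0) {x : Fin 4 → ℝ} (hx : x ∈ MM)

include h h1 h3 h24 hl hx

lemma pdA0 : pd 1 (fun y => A y 0) x = -A x 2 / (l * (x 1 - x 3)) := by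
  have hX := factX h h1 h3 h24 hx 0
  have hw : x 1 - x 3 ≠ 0 := ne_of_gt hx
  simp only [Pi.single_apply, show ((2:Fin 4) = 0) = False by simp,
    show ((3:Fin 4) = 0) = False by simp, show ((1:Fin 4) = 0) = False by simp,
    if_true, if_false, mul_zero, mul_one, add_zero, zero_add, mul_ite] at hX
  rw [eq_div_iff (mul_ne_zero hl hw)]
  linear_combination hX

lemma pdA1 : pd 1 (fun y => A y 1) x = A x 3 / (x 1 - x 3) := by
  have hX := factX h h1 h3 h24 hx 1
  have hw : x 1 - x 3 ≠ 0 := ne_of_gt hx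
  simp only [Pi.single_apply, show ((2:Fin 4) = 1) = False by simp,
    show ((3:Fin 4) = 1) = False by simp, show ((0:Fin 4) = 1) = False by simp,
    if_true, if_false, mul_zero, mul_one, add_zero, zero_add, mul_ite] at hX
  rw [eq_div_iff hw]
  have hXX : l * (pd 1 (fun y => A y 1) x * (x 1 - x 3)) = l * A x 3 := by
    linear_combination hX
  exact mul_left_cancel₀ hl hXX

lemma pdA2 : pd 1 (fun y => A y 2) x = A x 0 / (l * (x 1 - x 3)) := by
  have hX := factX h h1 h3 h24 hx 2
  have hw : x 1 - x 3 ≠ 0 := ne_of_gt hx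
  simp only [Pi.single_apply, show ((3:Fin 4) = 2) = False by simp,
    show ((0:Fin 4) = 2) = False by simp, show ((1:Fin 4) = 2) = False by simp,
    if_true, if_false, mul_zero, mul_one, add_zero, zero_add, mul_ite] at hX
  rw [eq_div_iff (mul_ne_zero hl hw)]
  linear_combination hX

lemma pdA3 : pd 1 (fun y => A y 3) x = A x 1 / (x 1 - x 3) := by
  have hX := factX h h1 h3 h24 hx 3
  have hw : x 1 - x 3 ≠ 0 := ne_of_gt hx
  simp only [Pi.single_apply, show ((2:Fin 4) = 3) = False by simp,
    show ((0:Fin 4) = 3) = False by simp, show ((1:Fin 4) = 3) = False by simp,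
    if_true, if_false, mul_zero, mul_one, add_zero, zero_add, mul_ite] at hX
  rw [eq_div_iff hw]
  have hXX : l * (pd 1 (fun y => A y 3) x * (x 1 - x 3)) = l * A x 1 := by
    linear_combination hX
  exact mul_left_cancel₀ hl hXX

end corollaries

lemma single_w (t : ℝ) : (Pi.single (1:Fin 4) t : Fin 4 → ℝ) 1
    - (Pi.single (1:Fin 4) t : Fin 4 → ℝ) 3 = t := by
  rw [Pi.single_eq_same, Pi.single_eq_of_ne (by decide : (3:Fin 4) ≠ 1)]
  simp

lemma mem_MM_single {t : ℝ} (ht : 0 < t) : (Pi.single (1:Fin 4) t : Fin 4 → ℝ) ∈ MM := by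
  simp only [MM, Set.mem_setOf_eq, single_w]; exact ht

lemma hasDerivAt_psi {A : (Fin 4 → ℝ) → Fin 4 → ℝ} (hA : ContDiffOn ℝ 1 A MM)
    (i : Fin 4) (u : ℝ) :
    HasDerivAt (fun u : ℝ => A (Pi.single 1 (Real.exp u)) i)
      (Real.exp u * pd 1 (fun y => A y i) (Pi.single 1 (Real.exp u))) u := by
  have hcurve : HasDerivAt (fun u : ℝ => (Pi.single (1:Fin 4) (Real.exp u) : Fin 4 → ℝ))
      (Real.exp u • (Pi.single (1:Fin 4) (1:ℝ) : Fin 4 → ℝ)) u := by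
    have h1 : (fun u : ℝ => (Pi.single (1:Fin 4) (Real.exp u) : Fin 4 → ℝ))
        = fun u : ℝ => Real.exp u • (Pi.single (1:Fin 4) (1:ℝ) : Fin 4 → ℝ) := by
      funext u; funext k; simp [Pi.single_apply]
    rw [h1]
    exact (Real.hasDerivAt_exp u).smul_const _
  have hd := diffAt hA (mem_MM_single (Real.exp_pos u)) i
  have h2 := hd.hasFDerivAt.comp_hasDerivAt u hcurve
  simpa [pd, map_smul, smul_eq_mul, Function.comp_def] using h2

lemma translation_key {A : (Fin 4 → ℝ) → Fin 4 → ℝ} (hA : ContDiffOn ℝ 1 A MM)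
    (h1 : PInvariantOn e1 A MM) (h3 : PInvariantOn e3 A MM)
    (h24 : PInvariantOn (fun _ => ![0, 1, 0, 1]) A MM)
    {x : Fin 4 → ℝ} (hx : x ∈ MM) (i : Fin 4) :
    A x i = A (Pi.single (1:Fin 4) (x 1 - x 3)) i := by
  have hdiff : ∀ y ∈ MM, DifferentiableAt ℝ (fun y => A y i) y := fun y hy => diffAt hA hy i
  set v0 : Fin 4 → ℝ := ![1,0,0,0] with hv0
  set v2 : Fin 4 → ℝ := ![0,0,1,0] with hv2
  set v13 : Fin 4 → ℝ := ![0,1,0,1] with hv13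
  have hz0 : ∀ y ∈ MM, ∑ j : Fin 4, v0 j * pd j (fun y => A y i) y = 0 := by
    intro y hy
    simp [hv0, Fin.sum_univ_four, fact1 h1 hy i]
  have hz2 : ∀ y ∈ MM, ∑ j : Fin 4, v2 j * pd j (fun y => A y i) y = 0 := by
    intro y hy
    simp [hv2, Fin.sum_univ_four, fact3 h3 hy i]
  have hz13 : ∀ y ∈ MM, ∑ j : Fin 4, v13 j * pd j (fun y => A y i) y = 0 := by
    intro y hy
    have := fact24 h24 hy i
    simp only [hv13, Fin.sum_univ_four, Matrix.cons_val_zero, Matrix.cons_val_one,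
      Matrix.head_cons, Matrix.cons_val_two, Matrix.tail_cons, Matrix.cons_val_three,
      zero_mul, one_mul, add_zero, zero_add]
    linarith
  have s1 : A (x + (-(x 0)) • v0) i = A x i :=
    const_along hdiff (by simp [hv0]) hz0 hx _
  set x1 := x + (-(x 0)) • v0 with hx1
  have hx1mem : x1 ∈ MM := by
    simp only [Set.mem_setOf_eq, hx1, Pi.add_apply, Pi.smul_apply, hv0, smul_eq_mul]
    simpa using hx
  have s2 : A (x1 + (-(x 2)) • v2) i = A x1 i :=
    const_along hdiff (by simp [hv2]) hz2 hx1mem _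
  set x2' := x1 + (-(x 2)) • v2 with hx2
  have hx2mem : x2' ∈ MM := by
    simp only [Set.mem_setOf_eq, hx2, hx1, Pi.add_apply, Pi.smul_apply, hv0, hv2, smul_eq_mul]
    simpa using hx
  have s3 : A (x2' + (-(x 3)) • v13) i = A x2' i :=
    const_along hdiff (by simp [hv13]) hz13 hx2mem _
  have hfinal : x2' + (-(x 3)) • v13 = Pi.single (1:Fin 4) (x 1 - x 3) := by
    funext k
    fin_cases k <;>
      simp [hx2, hx1, hv0, hv2, hv13, Pi.single_apply, Matrix.vecHead, Matrix.vecTail,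
        show (Fin.succ 2 : Fin 4) = 3 from rfl] <;> ring
  have hcomb : A (x2' + (-(x 3)) • v13) i = A x i := s3.trans (s2.trans s1)
  rw [hfinal] at hcomb
  exact hcomb.symm

noncomputable def psi (A : (Fin 4 → ℝ) → Fin 4 → ℝ) (i : Fin 4) (u : ℝ) : ℝ :=
  A (Pi.single 1 (Real.exp u)) i

section forward
variable {l : ℝ} {A : (Fin 4 → ℝ) → Fin 4 → ℝ}
  (hl : l ≠ 0) (hA : ContDiffOn ℝ 1 A MM)
  (h1 : PInvariantOn e1 A MM) (h3 : PInvariantOn e3 A MM)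
  (h24 : PInvariantOn (fun _ => ![0, 1, 0, 1]) A MM)
  (hX : PInvariantOn (fun x => ![x 2, l * x 3, -x 0, l * x 1]) A MM)

include hl hA h1 h3 h24 hX

lemma hd0 (u : ℝ) : HasDerivAt (psi A 0) (-(psi A 2 u) / l) u := by
  have h := hasDerivAt_psi hA 0 u
  rw [pdA0 hX h1 h3 h24 hl (mem_MM_single (Real.exp_pos u)), single_w] at h
  have h2 : HasDerivAt (psi A 0)
      (Real.exp u * (-A (Pi.single 1 (Real.exp u)) 2 / (l * Real.exp u))) u := h
  convert h2 using 1
  have hE := Real.exp_ne_zero u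
  show -(A (Pi.single 1 (Real.exp u)) 2) / l = _
  field_simp

lemma hd2 (u : ℝ) : HasDerivAt (psi A 2) (psi A 0 u / l) u := by
  have h := hasDerivAt_psi hA 2 u
  rw [pdA2 hX h1 h3 h24 hl (mem_MM_single (Real.exp_pos u)), single_w] at h
  have h2 : HasDerivAt (psi A 2)
      (Real.exp u * (A (Pi.single 1 (Real.exp u)) 0 / (l * Real.exp u))) u := h
  convert h2 using 1
  have hE := Real.exp_ne_zero u
  show (A (Pi.single 1 (Real.exp u)) 0) / l = _
  field_simp

lemma hd1 (u : ℝ) : HasDerivAt (psi A 1) (psi A 3 u) u := by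
  have h := hasDerivAt_psi hA 1 u
  rw [pdA1 hX h1 h3 h24 hl (mem_MM_single (Real.exp_pos u)), single_w] at h
  have h2 : HasDerivAt (psi A 1)
      (Real.exp u * (A (Pi.single 1 (Real.exp u)) 3 / Real.exp u)) u := h
  convert h2 using 1
  have hE := Real.exp_ne_zero u
  show (A (Pi.single 1 (Real.exp u)) 3) = _
  field_simp

lemma hd3 (u : ℝ) : HasDerivAt (psi A 3) (psi A 1 u) u := by
  have h := hasDerivAt_psi hA 3 u
  rw [pdA3 hX h1 h3 h24 hl (mem_MM_single (Real.exp_pos u)), single_w] at h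
  have h2 : HasDerivAt (psi A 3)
      (Real.exp u * (A (Pi.single 1 (Real.exp u)) 1 / Real.exp u)) u := h
  convert h2 using 1
  have hE := Real.exp_ne_zero u
  show (A (Pi.single 1 (Real.exp u)) 1) = _
  field_simp

end forward

section forward2
variable {l : ℝ} {A : (Fin 4 → ℝ) → Fin 4 → ℝ}
  (hl : l ≠ 0) (hA : ContDiffOn ℝ 1 A MM)
  (h1 : PInvariantOn e1 A MM) (h3 : PInvariantOn e3 A MM)
  (h24 : PInvariantOn (fun _ => ![0, 1, 0, 1]) A MM)
  (hX : PInvariantOn (fun x => ![x 2, l * x 3, -x 0, l * x 1]) A MM)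

include hl hA h1 h3 h24 hX

lemma constP (u : ℝ) :
    psi A 0 u * Real.cos (u / l) + psi A 2 u * Real.sin (u / l) = psi A 0 0 := by
  have hD : ∀ v : ℝ, HasDerivAt
      (fun v => psi A 0 v * Real.cos (v / l) + psi A 2 v * Real.sin (v / l)) 0 v := by
    intro v
    have hc : HasDerivAt (fun v : ℝ => Real.cos (v / l)) (-Real.sin (v / l) * (1 / l)) v :=
      ((hasDerivAt_id' v).div_const l).cos
    have hs : HasDerivAt (fun v : ℝ => Real.sin (v / l)) (Real.cos (v / l) * (1 / l)) v :=
      ((hasDerivAt_id' v).div_const l).sin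
    have h := ((hd0 hl hA h1 h3 h24 hX v).mul hc).add ((hd2 hl hA h1 h3 h24 hX v).mul hs)
    convert h using 1
    · rfl
    · rfl
    · rfl
    field_simp
    ring
  have hconst := is_const_of_deriv_eq_zero (fun v => (hD v).differentiableAt)
    (fun v => (hD v).deriv) u 0
  simpa using hconst

lemma constQ (u : ℝ) :
    psi A 0 u * Real.sin (u / l) - psi A 2 u * Real.cos (u / l) = -psi A 2 0 := by
  have hD : ∀ v : ℝ, HasDerivAt
      (fun v => psi A 0 v * Real.sin (v / l) - psi A 2 v * Real.cos (v / l)) 0 v := by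
    intro v
    have hc : HasDerivAt (fun v : ℝ => Real.cos (v / l)) (-Real.sin (v / l) * (1 / l)) v :=
      ((hasDerivAt_id' v).div_const l).cos
    have hs : HasDerivAt (fun v : ℝ => Real.sin (v / l)) (Real.cos (v / l) * (1 / l)) v :=
      ((hasDerivAt_id' v).div_const l).sin
    have h := ((hd0 hl hA h1 h3 h24 hX v).mul hs).sub ((hd2 hl hA h1 h3 h24 hX v).mul hc)
    convert h using 1
    · rfl
    · rfl
    · rfl
    field_simp
    ring
  have hconst := is_const_of_deriv_eq_zero (fun v => (hD v).differentiableAt)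
    (fun v => (hD v).deriv) u 0
  simpa using hconst

lemma constR (u : ℝ) :
    (psi A 1 u + psi A 3 u) * Real.exp (-u) = psi A 1 0 + psi A 3 0 := by
  have hD : ∀ v : ℝ, HasDerivAt
      (fun v => (psi A 1 v + psi A 3 v) * Real.exp (-v)) 0 v := by
    intro v
    have he : HasDerivAt (fun v : ℝ => Real.exp (-v)) (Real.exp (-v) * (-1)) v :=
      (Real.hasDerivAt_exp (-v)).comp v (hasDerivAt_neg v)
    have h := ((hd1 hl hA h1 h3 h24 hX v).add (hd3 hl hA h1 h3 h24 hX v)).mul he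
    convert h using 1
    · rfl
    · rfl
    · rfl
    simp only [Pi.add_apply, Pi.sub_apply]
    ring
  have hconst := is_const_of_deriv_eq_zero (fun v => (hD v).differentiableAt)
    (fun v => (hD v).deriv) u 0
  simpa using hconst

lemma constS (u : ℝ) :
    (psi A 1 u - psi A 3 u) * Real.exp u = psi A 1 0 - psi A 3 0 := by
  have hD : ∀ v : ℝ, HasDerivAt
      (fun v => (psi A 1 v - psi A 3 v) * Real.exp v) 0 v := by
    intro v
    have he : HasDerivAt (fun v : ℝ => Real.exp v) (Real.exp v) v := Real.hasDerivAt_exp v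
    have h := ((hd1 hl hA h1 h3 h24 hX v).sub (hd3 hl hA h1 h3 h24 hX v)).mul he
    convert h using 1
    · rfl
    · rfl
    · rfl
    simp only [Pi.add_apply, Pi.sub_apply]
    ring
  have hconst := is_const_of_deriv_eq_zero (fun v => (hD v).differentiableAt)
    (fun v => (hD v).deriv) u 0
  simpa using hconst

end forward2

lemma forward {l : ℝ} {A : (Fin 4 → ℝ) → Fin 4 → ℝ}
    (hl : l ≠ 0) (hA : ContDiffOn ℝ 1 A MM)
    (h1 : PInvariantOn e1 A MM) (h3 : PInvariantOn e3 A MM)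
    (h24 : PInvariantOn (fun _ => ![0, 1, 0, 1]) A MM)
    (hX : PInvariantOn (fun x => ![x 2, l * x 3, -x 0, l * x 1]) A MM) :
    ∃ C1 C2 C3 C4 : ℝ, ∀ x ∈ MM,
        A x 0 = C1 * Real.cos (Real.log (x 1 - x 3) / l)
            + C3 * Real.sin (Real.log (x 1 - x 3) / l) ∧
        A x 2 = C1 * Real.sin (Real.log (x 1 - x 3) / l)
            - C3 * Real.cos (Real.log (x 1 - x 3) / l) ∧
        A x 1 = C2 * (x 1 - x 3) + C4 / (x 1 - x 3) ∧
        A x 3 = C2 * (x 1 - x 3) - C4 / (x 1 - x 3) := by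
  refine ⟨psi A 0 0, (psi A 1 0 + psi A 3 0) / 2, -psi A 2 0, (psi A 1 0 - psi A 3 0) / 2,
    fun x hx => ?_⟩
  have hw : (0:ℝ) < x 1 - x 3 := hx
  set w : ℝ := x 1 - x 3 with hwdef
  set u : ℝ := Real.log w with hudef
  have hE : Real.exp u = w := Real.exp_log hw
  have hw0 : w ≠ 0 := ne_of_gt hw
  have hAi : ∀ i : Fin 4, A x i = psi A i u := by
    intro i
    show A x i = A (Pi.single 1 (Real.exp u)) i
    rw [hE, hwdef]
    exact translation_key hA h1 h3 h24 hx i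
  have hPu := constP hl hA h1 h3 h24 hX (l := l) u
  have hQu := constQ hl hA h1 h3 h24 hX (l := l) u
  have hRu := constR hl hA h1 h3 h24 hX (l := l) u
  have hSu := constS hl hA h1 h3 h24 hX (l := l) u
  rw [Real.exp_neg, hE] at hRu
  rw [hE] at hSu
  have hsq := Real.sin_sq_add_cos_sq (u / l)
  have h1' : psi A 1 u + psi A 3 u = (psi A 1 0 + psi A 3 0) * w := by
    field_simp at hRu
    linarith
  refine ⟨?_, ?_, ?_, ?_⟩
  · rw [hAi 0]
    linear_combination Real.cos (u / l) * hPu + Real.sin (u / l) * hQu - psi A 0 u * hsq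
  · rw [hAi 2]
    linear_combination Real.sin (u / l) * hPu - Real.cos (u / l) * hQu - psi A 2 u * hsq
  · rw [hAi 1]
    have hww : w * w⁻¹ = 1 := mul_inv_cancel₀ hw0
    linear_combination (1 / 2) * h1' + (w⁻¹ / 2) * hSu
      - ((psi A 1 u - psi A 3 u) / 2) * hww
  · rw [hAi 3]
    have hww : w * w⁻¹ = 1 := mul_inv_cancel₀ hw0
    linear_combination (1 / 2) * h1' - (w⁻¹ / 2) * hSu
      + ((psi A 1 u - psi A 3 u) / 2) * hww

lemma pd_formula {g : (Fin 4 → ℝ) → ℝ} {x : Fin 4 → ℝ} (hx : x ∈ MM)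
    {B : ℝ → ℝ} {b : ℝ} (hB : HasDerivAt B b (x 1 - x 3))
    (hform : ∀ y ∈ MM, g y = B (y 1 - y 3)) (j : Fin 4) :
    pd j g x = b * ((Pi.single j 1 : Fin 4 → ℝ) 1 - (Pi.single j 1 : Fin 4 → ℝ) 3) := by
  have hL : HasFDerivAt (fun y : Fin 4 → ℝ => y 1 - y 3)
      ((ContinuousLinearMap.proj 1 : (Fin 4 → ℝ) →L[ℝ] ℝ) - ContinuousLinearMap.proj 3) x :=
    ((ContinuousLinearMap.proj 1 : (Fin 4 → ℝ) →L[ℝ] ℝ).hasFDerivAt).sub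
      ((ContinuousLinearMap.proj 3 : (Fin 4 → ℝ) →L[ℝ] ℝ).hasFDerivAt)
  have h2 : HasFDerivAt (fun y : Fin 4 → ℝ => B (y 1 - y 3))
      (b • ((ContinuousLinearMap.proj 1 : (Fin 4 → ℝ) →L[ℝ] ℝ) - ContinuousLinearMap.proj 3)) x :=
    hB.comp_hasFDerivAt x hL
  have heq : g =ᶠ[nhds x] fun y => B (y 1 - y 3) :=
    Filter.eventuallyEq_of_mem (isOpen_MM.mem_nhds hx) hform
  unfold pd
  rw [heq.fderiv_eq, h2.fderiv]
  simp [smul_eq_mul, mul_sub]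

section backward
variable {l C1 C2 C3 C4 : ℝ} {A : (Fin 4 → ℝ) → Fin 4 → ℝ}

lemma pdB0 (hform : ∀ y ∈ MM, A y 0
      = C1 * Real.cos (Real.log (y 1 - y 3) / l) + C3 * Real.sin (Real.log (y 1 - y 3) / l))
    {x : Fin 4 → ℝ} (hx : x ∈ MM) (j : Fin 4) :
    pd j (fun y => A y 0) x
      = (C1 * (-Real.sin (Real.log (x 1 - x 3) / l)) + C3 * Real.cos (Real.log (x 1 - x 3) / l))
          * ((x 1 - x 3)⁻¹ / l)
        * ((Pi.single j 1 : Fin 4 → ℝ) 1 - (Pi.single j 1 : Fin 4 → ℝ) 3) := by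
  have hw : (0:ℝ) < x 1 - x 3 := hx
  have hw0 : x 1 - x 3 ≠ 0 := ne_of_gt hw
  have hli : HasDerivAt (fun t : ℝ => Real.log t / l) ((x 1 - x 3)⁻¹ / l) (x 1 - x 3) :=
    (Real.hasDerivAt_log hw0).div_const l
  have hcos : HasDerivAt (fun t : ℝ => Real.cos (Real.log t / l))
      (-Real.sin (Real.log (x 1 - x 3) / l) * ((x 1 - x 3)⁻¹ / l)) (x 1 - x 3) :=
    (Real.hasDerivAt_cos _).comp _ hli
  have hsin : HasDerivAt (fun t : ℝ => Real.sin (Real.log t / l))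
      (Real.cos (Real.log (x 1 - x 3) / l) * ((x 1 - x 3)⁻¹ / l)) (x 1 - x 3) :=
    (Real.hasDerivAt_sin _).comp _ hli
  have hB := (hcos.const_mul C1).add (hsin.const_mul C3)
  have := pd_formula hx hB hform j
  rw [this]; ring

lemma pdB2 (hform : ∀ y ∈ MM, A y 2
      = C1 * Real.sin (Real.log (y 1 - y 3) / l) - C3 * Real.cos (Real.log (y 1 - y 3) / l))
    {x : Fin 4 → ℝ} (hx : x ∈ MM) (j : Fin 4) :
    pd j (fun y => A y 2) x
      = (C1 * Real.cos (Real.log (x 1 - x 3) / l) + C3 * Real.sin (Real.log (x 1 - x 3) / l))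
          * ((x 1 - x 3)⁻¹ / l)
        * ((Pi.single j 1 : Fin 4 → ℝ) 1 - (Pi.single j 1 : Fin 4 → ℝ) 3) := by
  have hw : (0:ℝ) < x 1 - x 3 := hx
  have hw0 : x 1 - x 3 ≠ 0 := ne_of_gt hw
  have hli : HasDerivAt (fun t : ℝ => Real.log t / l) ((x 1 - x 3)⁻¹ / l) (x 1 - x 3) :=
    (Real.hasDerivAt_log hw0).div_const l
  have hcos : HasDerivAt (fun t : ℝ => Real.cos (Real.log t / l))
      (-Real.sin (Real.log (x 1 - x 3) / l) * ((x 1 - x 3)⁻¹ / l)) (x 1 - x 3) :=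
    (Real.hasDerivAt_cos _).comp _ hli
  have hsin : HasDerivAt (fun t : ℝ => Real.sin (Real.log t / l))
      (Real.cos (Real.log (x 1 - x 3) / l) * ((x 1 - x 3)⁻¹ / l)) (x 1 - x 3) :=
    (Real.hasDerivAt_sin _).comp _ hli
  have hB := (hsin.const_mul C1).sub (hcos.const_mul C3)
  have := pd_formula hx hB hform j
  rw [this]; ring

lemma pdB1 (hform : ∀ y ∈ MM, A y 1 = C2 * (y 1 - y 3) + C4 / (y 1 - y 3))
    {x : Fin 4 → ℝ} (hx : x ∈ MM) (j : Fin 4) :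
    pd j (fun y => A y 1) x
      = (C2 - C4 * ((x 1 - x 3) ^ 2)⁻¹)
        * ((Pi.single j 1 : Fin 4 → ℝ) 1 - (Pi.single j 1 : Fin 4 → ℝ) 3) := by
  have hw : (0:ℝ) < x 1 - x 3 := hx
  have hw0 : x 1 - x 3 ≠ 0 := ne_of_gt hw
  have hB : HasDerivAt (fun t : ℝ => C2 * t + C4 * t⁻¹)
      (C2 * 1 + C4 * (-((x 1 - x 3) ^ 2)⁻¹)) (x 1 - x 3) :=
    ((hasDerivAt_id _).const_mul C2).add ((hasDerivAt_inv hw0).const_mul C4)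
  have hform' : ∀ y ∈ MM, A y 1 = C2 * (y 1 - y 3) + C4 * (y 1 - y 3)⁻¹ := by
    intro y hy; rw [hform y hy, div_eq_mul_inv]
  have := pd_formula hx hB hform' j
  rw [this]; ring

lemma pdB3 (hform : ∀ y ∈ MM, A y 3 = C2 * (y 1 - y 3) - C4 / (y 1 - y 3))
    {x : Fin 4 → ℝ} (hx : x ∈ MM) (j : Fin 4) :
    pd j (fun y => A y 3) x
      = (C2 + C4 * ((x 1 - x 3) ^ 2)⁻¹)
        * ((Pi.single j 1 : Fin 4 → ℝ) 1 - (Pi.single j 1 : Fin 4 → ℝ) 3) := by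
  have hw : (0:ℝ) < x 1 - x 3 := hx
  have hw0 : x 1 - x 3 ≠ 0 := ne_of_gt hw
  have hB : HasDerivAt (fun t : ℝ => C2 * t - C4 * t⁻¹)
      (C2 * 1 - C4 * (-((x 1 - x 3) ^ 2)⁻¹)) (x 1 - x 3) :=
    ((hasDerivAt_id _).const_mul C2).sub ((hasDerivAt_inv hw0).const_mul C4)
  have hform' : ∀ y ∈ MM, A y 3 = C2 * (y 1 - y 3) - C4 * (y 1 - y 3)⁻¹ := by
    intro y hy; rw [hform y hy, div_eq_mul_inv]
  have := pd_formula hx hB hform' j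
  rw [this]; ring

end backward

lemma backward {l C1 C2 C3 C4 : ℝ} {A : (Fin 4 → ℝ) → Fin 4 → ℝ} (hl : l ≠ 0)
    (hform : ∀ x ∈ MM,
        A x 0 = C1 * Real.cos (Real.log (x 1 - x 3) / l)
            + C3 * Real.sin (Real.log (x 1 - x 3) / l) ∧
        A x 2 = C1 * Real.sin (Real.log (x 1 - x 3) / l)
            - C3 * Real.cos (Real.log (x 1 - x 3) / l) ∧
        A x 1 = C2 * (x 1 - x 3) + C4 / (x 1 - x 3) ∧
        A x 3 = C2 * (x 1 - x 3) - C4 / (x 1 - x 3)) :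
    PInvariantOn e1 A MM ∧ PInvariantOn e3 A MM ∧
      PInvariantOn (fun _ => ![0, 1, 0, 1]) A MM ∧
      PInvariantOn (fun x => ![x 2, l * x 3, -x 0, l * x 1]) A MM := by
  have hf0 : ∀ y ∈ MM, A y 0 = C1 * Real.cos (Real.log (y 1 - y 3) / l)
      + C3 * Real.sin (Real.log (y 1 - y 3) / l) := fun y hy => (hform y hy).1
  have hf2 : ∀ y ∈ MM, A y 2 = C1 * Real.sin (Real.log (y 1 - y 3) / l)
      - C3 * Real.cos (Real.log (y 1 - y 3) / l) := fun y hy => (hform y hy).2.1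
  have hf1 : ∀ y ∈ MM, A y 1 = C2 * (y 1 - y 3) + C4 / (y 1 - y 3) :=
    fun y hy => (hform y hy).2.2.1
  have hf3 : ∀ y ∈ MM, A y 3 = C2 * (y 1 - y 3) - C4 / (y 1 - y 3) :=
    fun y hy => (hform y hy).2.2.2
  refine ⟨?_, ?_, ?_, ?_⟩
  · intro x hx i
    fin_cases i <;>
      simp [lieCov, e1, Fin.sum_univ_four, pd_const, pdB0 hf0 hx, pdB1 hf1 hx,
        pdB2 hf2 hx, pdB3 hf3 hx, Pi.single_apply] <;> ring
  · intro x hx i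
    fin_cases i <;>
      simp [lieCov, e3, Fin.sum_univ_four, pd_const, pdB0 hf0 hx, pdB1 hf1 hx,
        pdB2 hf2 hx, pdB3 hf3 hx, Pi.single_apply] <;> ring
  · intro x hx i
    fin_cases i <;>
      simp [lieCov, Fin.sum_univ_four, pd_const, pdB0 hf0 hx, pdB1 hf1 hx,
        pdB2 hf2 hx, pdB3 hf3 hx, Pi.single_apply] <;> ring
  · intro x hx i
    have hw : (0:ℝ) < x 1 - x 3 := hx
    have hw0 : x 1 - x 3 ≠ 0 := ne_of_gt hw
    obtain ⟨F0, F2, F1, F3⟩ := hform x hx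
    fin_cases i <;>
      simp [lieCov, Fin.sum_univ_four, pd_proj, pd_const_mul_proj, pd_neg_proj,
        pdB0 hf0 hx, pdB1 hf1 hx, pdB2 hf2 hx, pdB3 hf3 hx, F0, F2, F1, F3,
        Pi.single_apply] <;>
      field_simp <;> ring

/-- Class P_{4,7}: proportional bi-rotations with translations in an isotropic
hyperplane, on the domain {x² - x⁴ > 0}. -/
theorem class_P47 (l : ℝ) (hl : l ≠ 0) (A : (Fin 4 → ℝ) → Fin 4 → ℝ)
    (hA : ContDiffOn ℝ 1 A {x : Fin 4 → ℝ | 0 < x 1 - x 3}) :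
    (PInvariantOn e1 A {x | 0 < x 1 - x 3} ∧
      PInvariantOn e3 A {x | 0 < x 1 - x 3} ∧
      PInvariantOn (fun _ => ![0, 1, 0, 1]) A {x | 0 < x 1 - x 3} ∧
      PInvariantOn (fun x => ![x 2, l * x 3, -x 0, l * x 1]) A {x | 0 < x 1 - x 3}) ↔
      ∃ C1 C2 C3 C4 : ℝ, ∀ x ∈ {x : Fin 4 → ℝ | 0 < x 1 - x 3},
        A x 0 = C1 * cos (log (x 1 - x 3) / l) + C3 * sin (log (x 1 - x 3) / l) ∧
        A x 2 = C1 * sin (log (x 1 - x 3) / l) - C3 * cos (log (x 1 - x 3) / l) ∧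
        A x 1 = C2 * (x 1 - x 3) + C4 / (x 1 - x 3) ∧
        A x 3 = C2 * (x 1 - x 3) - C4 / (x 1 - x 3) := by
  constructor
  · rintro ⟨h1, h3, h24, hX⟩
    exact forward hl hA h1 h3 h24 hX
  · rintro ⟨C1, C2, C3, C4, hform⟩
    exact backward hl hform
end

section
/- Fix λ ≠ 0. If a continuously differentiable covector field A : ℝ⁴ → ℝ⁴ satisfies the invariance conditions L_ξA = 0 for the five vector fields ξ = e₁, ξ = e₂, ξ = e₃, ξ = e₄ and ξ = e₁₃ + λe₂₄ = (x³, λx⁴, −x¹, λx²), then A ≡ 0. In other words, the class P₍₅,₂₎ of potentials invariant under all translations together with a proportional bi-rotation with λ ≠ 0 is empty (contains only the zero field). -/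
open Real

lemma pd_constf (j : Fin 4) (c : ℝ) (x : Fin 4 → ℝ) : pd j (fun _ => c) x = 0 := by
  simp [pd]

lemma pd_coord (j k : Fin 4) (x : Fin 4 → ℝ) :
    pd j (fun y => y k) x = if k = j then 1 else 0 := by
  have h : fderiv ℝ (fun y : Fin 4 → ℝ => y k) x
      = ContinuousLinearMap.proj (R := ℝ) (φ := fun _ : Fin 4 => ℝ) k :=
    (ContinuousLinearMap.proj (R := ℝ) (φ := fun _ : Fin 4 => ℝ) k).fderiv
  simp [pd, h, Pi.single_apply]

lemma diff_coord (k : Fin 4) : Differentiable ℝ (fun y : Fin 4 → ℝ => y k) :=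
  (ContinuousLinearMap.proj (R := ℝ) (φ := fun _ : Fin 4 => ℝ) k).differentiable

lemma pd_cmul (j k : Fin 4) (c : ℝ) (x : Fin 4 → ℝ) :
    pd j (fun y => c * y k) x = c * (if k = j then 1 else 0) := by
  rw [pd, fderiv_const_mul (diff_coord k x)]
  have := pd_coord j k x
  simp only [pd] at this
  simp [this]

lemma pd_negcoord (j k : Fin 4) (x : Fin 4 → ℝ) :
    pd j (fun y => -y k) x = -(if k = j then 1 else 0) := by
  rw [pd, fderiv_fun_neg]
  have := pd_coord j k x
  simp only [pd] at this
  simp [this]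

/-- Class P_{5,2} is empty: invariance under all translations and a
proportional bi-rotation (λ ≠ 0) forces A ≡ 0. -/
theorem class_P52_empty (l : ℝ) (hl : l ≠ 0)
    (A : (Fin 4 → ℝ) → Fin 4 → ℝ) (hA : ContDiff ℝ 1 A)
    (h1 : PInvariant e1 A) (h2 : PInvariant e2 A)
    (h3 : PInvariant e3 A) (h4 : PInvariant e4 A)
    (h5 : PInvariant (fun x => ![x 2, l * x 3, -x 0, l * x 1]) A) :
    ∀ x i, A x i = 0 := by
  have hpd : ∀ (x : Fin 4 → ℝ) (i j : Fin 4), pd j (fun y => A y i) x = 0 := by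
    intro x i j
    fin_cases j
    · have := h1 x i; simpa [lieCov, e1, Fin.sum_univ_four, pd_constf] using this
    · have := h2 x i; simpa [lieCov, e2, Fin.sum_univ_four, pd_constf] using this
    · have := h3 x i; simpa [lieCov, e3, Fin.sum_univ_four, pd_constf] using this
    · have := h4 x i; simpa [lieCov, e4, Fin.sum_univ_four, pd_constf] using this
  intro x i
  have q0 := h5 x 2
  have q1 := h5 x 3
  have q2 := h5 x 0
  have q3 := h5 x 1
  simp [lieCov, Fin.sum_univ_four, hpd, pd_coord, pd_cmul, pd_negcoord] at q0 q1 q2 q3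
  fin_cases i
  · exact q0
  · exact q1.resolve_right hl
  · simpa using q2
  · exact q3.resolve_right hl
end
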